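/- Let n ≥ 2, let a, b be real numbers with 1 + 2(n-1)a ≠ 0, and let R be an algebraic curvature tensor on ℝⁿ. Then Ric(D_{a,b}(R)) = -4b·Ric(R)² + (4/n)(2b + (n-2)a)·scal(R)·Ric(R) + [2(n²b² - 2(n-1)(a-b)(1-2b))/(n(1+2(n-1)a))]·|Ric₀(R)|²·id + (4/n²)(a-b)·scal(R)²·id, where Ric(R)² denotes the square of Ric(R) viewed as a symmetric endomorphism of ℝⁿ. -/

import Mathlib

open scoped RealInnerProductSpace

noncomputable section

/-- Euclidean `n`-space. -/
abbrev En (n : ℕ) := EuclideanSpace ℝ (Fin n)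

/-- Quadrilinear-form-valued objects (curvature-type tensors), given by their values. -/
abbrev Curv4 (n : ℕ) := En n → En n → En n → En n → ℝ

/-- Bilinear-form-valued objects, given by their values. -/
abbrev Bil (n : ℕ) := En n → En n → ℝ

/-- The standard orthonormal basis vectors of `En n`. -/
def stdB (n : ℕ) (i : Fin n) : En n := EuclideanSpace.single i 1

/-- `R : Curv4 n` is multilinear, i.e. is the evaluation of a quadrilinear map. -/
def IsMultilinear4 {n : ℕ} (R : Curv4 n) : Prop :=
  ∃ L : En n →ₗ[ℝ] En n →ₗ[ℝ] En n →ₗ[ℝ] En n →ₗ[ℝ] ℝ,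
    ∀ x y z w, R x y z w = L x y z w

/-- `R` is an algebraic curvature tensor: a quadrilinear form which is antisymmetric in the
first two arguments, symmetric under exchange of the two pairs, and satisfies the first
Bianchi identity. -/
def IsAlgCurv {n : ℕ} (R : Curv4 n) : Prop :=
  IsMultilinear4 R ∧
  (∀ x y z w, R x y z w = -R y x z w) ∧
  (∀ x y z w, R x y z w = R z w x y) ∧
  (∀ x y z w, R x y z w + R y z x w + R z x y w = 0)

/-- The Ricci curvature `Ric(R)(x,z) = ∑ₚ R(x,eₚ,z,eₚ)`. -/
def ric {n : ℕ} (R : Curv4 n) : Bil n :=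
  fun x z => ∑ p, R x (stdB n p) z (stdB n p)

/-- The scalar curvature `scal(R) = ∑ᵢ Ric(R)(eᵢ,eᵢ)`. -/
def scal {n : ℕ} (R : Curv4 n) : ℝ :=
  ∑ i, ric R (stdB n i) (stdB n i)

/-- The identity (the standard inner product) as a bilinear form. -/
def idB (n : ℕ) : Bil n := fun x z => ⟪x, z⟫

/-- The trace-free Ricci tensor `Ric₀(R) = Ric(R) - (scal(R)/n)·id`. -/
def ric0 {n : ℕ} (R : Curv4 n) : Bil n :=
  fun x z => ric R x z - scal R / n * ⟪x, z⟫

/-- The square of a bilinear form, viewed as a symmetric endomorphism: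
`B²(x,z) = ∑ₚ B(x,eₚ)·B(eₚ,z)`. -/
def bilSq {n : ℕ} (B : Bil n) : Bil n :=
  fun x z => ∑ p, B x (stdB n p) * B (stdB n p) z

/-- The squared Frobenius norm `|B|² = tr(B²)` of a bilinear form. -/
def bilNormSq {n : ℕ} (B : Bil n) : ℝ :=
  ∑ i, bilSq B (stdB n i) (stdB n i)

/-- The Kulkarni–Nomizu product of two bilinear forms:
`(A ∧ B)(x,y,z,w) = A(x,z)B(y,w) - A(x,w)B(y,z) - A(y,z)B(x,w) + A(y,w)B(x,z)`. -/
def KN {n : ℕ} (A B : Bil n) : Curv4 n :=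
  fun x y z w => A x z * B y w - A x w * B y z - A y z * B x w + A y w * B x z

/-- Böhm–Wilking's error term
`D_{a,b}(R) = (2b+(n-2)b²-2a)·Ric₀∧Ric₀ + 2a·Ric∧Ric + 2b²·Ric₀²∧id
  + ((nb²(1-2b)-2(a-b)(1-2b+nb²))/(n(1+2(n-1)a)))·|Ric₀|²·id∧id`. -/
def Dab {n : ℕ} (a b : ℝ) (R : Curv4 n) : Curv4 n :=
  fun x y z w =>
    (2 * b + ((n : ℝ) - 2) * b ^ 2 - 2 * a) * KN (ric0 R) (ric0 R) x y z w +
      2 * a * KN (ric R) (ric R) x y z w +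
      2 * b ^ 2 * KN (bilSq (ric0 R)) (idB n) x y z w +
      ((n : ℝ) * b ^ 2 * (1 - 2 * b) - 2 * (a - b) * (1 - 2 * b + (n : ℝ) * b ^ 2)) /
          ((n : ℝ) * (1 + 2 * ((n : ℝ) - 1) * a)) * bilNormSq (ric0 R) *
        KN (idB n) (idB n) x y z w

/-- Böhm–Wilking's linear map
`l_{a,b}(R) = R + b·Ric(R)∧id + (1/n)(a-b)·scal(R)·id∧id`. -/
def lab {n : ℕ} (a b : ℝ) (R : Curv4 n) : Curv4 n :=
  fun x y z w =>
    R x y z w + b * KN (ric R) (idB n) x y z w +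
      1 / (n : ℝ) * (a - b) * scal R * KN (idB n) (idB n) x y z w

end


/-!
The Ricci contraction of a Kulkarni–Nomizu product is
`Ric(A ∧ B) = tr B · A + tr A · B - AB - BA`. Applied to the four terms of `D_{a,b}(R)`, together
with `tr Ric₀ = 0`, `tr id = n` and `Ric₀² = Ric² - (2 scal/n) Ric + (scal/n)² id`, this turns
the claim into an identity of rational functions in `n`, `a`, `b`.
-/

open Finset

variable {n : ℕ}

lemma stdB_eq_basisFun : stdB n = EuclideanSpace.basisFun (Fin n) ℝ := by
  funext i
  simp [stdB]

lemma inner_stdB_self (i : Fin n) : ⟪stdB n i, stdB n i⟫ = 1 := by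
  simp [stdB]

lemma sum_inner_stdB_mul_inner (x z : En n) :
    ∑ p, ⟪x, stdB n p⟫ * ⟪stdB n p, z⟫ = ⟪x, z⟫ := by
  rw [stdB_eq_basisFun]
  exact (EuclideanSpace.basisFun (Fin n) ℝ).sum_inner_mul_inner x z

noncomputable def bilTr (B : Bil n) : ℝ := ∑ i, B (stdB n i) (stdB n i)

noncomputable def bilMul (A B : Bil n) : Bil n := fun x z => ∑ p, A x (stdB n p) * B (stdB n p) z

def IsBilinear (B : Bil n) : Prop :=
  ∃ L : LinearMap.BilinForm ℝ (En n), ∀ x z, B x z = L x z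

lemma bilTr_ric (R : Curv4 n) : bilTr (ric R) = scal R := rfl

lemma bilTr_bilSq (B : Bil n) : bilTr (bilSq B) = bilNormSq B := rfl

lemma bilMul_self (B : Bil n) : bilMul B B = bilSq B := rfl

lemma bilTr_idB : bilTr (idB n) = n := by
  simp only [bilTr, idB, inner_stdB_self, sum_const, card_univ, Fintype.card_fin, nsmul_eq_mul,
    mul_one]

lemma bilTr_ric0 (hn : (n : ℝ) ≠ 0) (R : Curv4 n) : bilTr (ric0 R) = 0 := by
  simp only [bilTr, ric0, inner_stdB_self, mul_one, sum_sub_distrib, sum_const, card_univ,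
    Fintype.card_fin, nsmul_eq_mul]
  field_simp
  exact sub_self _

lemma ric_add (R S : Curv4 n) (x z : En n) :
    ric (fun x y z w => R x y z w + S x y z w) x z = ric R x z + ric S x z :=
  sum_add_distrib

lemma ric_const_mul (c : ℝ) (R : Curv4 n) (x z : En n) :
    ric (fun x y z w => c * R x y z w) x z = c * ric R x z :=
  (mul_sum _ _ _).symm

lemma ric_KN (A B : Bil n) (x z : En n) :
    ric (KN A B) x z = bilTr B * A x z + bilTr A * B x z - bilMul A B x z - bilMul B A x z := by
  have hBA : bilMul B A x z = ∑ p, A (stdB n p) z * B x (stdB n p) :=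
    sum_congr rfl fun _ _ => mul_comm _ _
  rw [hBA]
  simp only [ric, KN, bilTr, bilMul, sum_add_distrib, sum_sub_distrib, ← mul_sum, ← sum_mul]
  ring

lemma isBilinear_idB : IsBilinear (idB n) :=
  ⟨innerₗ (En n), fun _ _ => rfl⟩

namespace IsBilinear

variable {A B : Bil n}

lemma bilMul_idB (hB : IsBilinear B) (x z : En n) : bilMul B (idB n) x z = B x z := by
  obtain ⟨L, hL⟩ := hB
  conv_rhs => rw [hL, ← (EuclideanSpace.basisFun (Fin n) ℝ).sum_repr' z]
  simp [bilMul, idB, hL, stdB_eq_basisFun, mul_comm]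

lemma idB_bilMul (hB : IsBilinear B) (x z : En n) : bilMul (idB n) B x z = B x z := by
  obtain ⟨L, hL⟩ := hB
  conv_rhs => rw [hL, ← (EuclideanSpace.basisFun (Fin n) ℝ).sum_repr' x]
  simp [bilMul, idB, hL, stdB_eq_basisFun, real_inner_comm]

lemma sub_const_mul_inner (hB : IsBilinear B) (c : ℝ) :
    IsBilinear (fun x z => B x z - c * ⟪x, z⟫) := by
  obtain ⟨L, hL⟩ := hB
  exact ⟨L - c • innerₗ (En n), fun x z => by simp [hL]⟩

lemma bilMul (hA : IsBilinear A) (hB : IsBilinear B) : IsBilinear (bilMul A B) := by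
  obtain ⟨LA, hA⟩ := hA
  obtain ⟨LB, hB⟩ := hB
  exact ⟨∑ p, (LinearMap.mul ℝ ℝ).compl₁₂ (LA.flip (stdB n p)) (LB (stdB n p)),
    fun x z => by simp [_root_.bilMul, hA, hB]⟩

lemma bilSq_sub_const_mul_inner (hB : IsBilinear B) (c : ℝ) (x z : En n) :
    bilSq (fun x z => B x z - c * ⟪x, z⟫) x z = bilSq B x z - 2 * c * B x z + c ^ 2 * ⟪x, z⟫ := by
  have hright : ∑ p, B x (stdB n p) * ⟪stdB n p, z⟫ = B x z := hB.bilMul_idB x z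
  have hleft : ∑ p, ⟪x, stdB n p⟫ * B (stdB n p) z = B x z := hB.idB_bilMul x z
  calc bilSq (fun x z => B x z - c * ⟪x, z⟫) x z
      = bilSq B x z - c * ∑ p, B x (stdB n p) * ⟪stdB n p, z⟫
          - c * ∑ p, ⟪x, stdB n p⟫ * B (stdB n p) z
          + c ^ 2 * ∑ p, ⟪x, stdB n p⟫ * ⟪stdB n p, z⟫ := by
        simp only [bilSq, mul_sum, ← sum_sub_distrib, ← sum_add_distrib]
        exact sum_congr rfl fun _ _ => by ring
    _ = bilSq B x z - 2 * c * B x z + c ^ 2 * ⟪x, z⟫ := by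
        rw [hright, hleft, sum_inner_stdB_mul_inner]
        ring

end IsBilinear

lemma IsMultilinear4.isBilinear_ric {R : Curv4 n} (hR : IsMultilinear4 R) :
    IsBilinear (ric R) := by
  obtain ⟨L, hL⟩ := hR
  exact ⟨∑ p, (L.flip (stdB n p)).compr₂ (LinearMap.applyₗ (stdB n p)),
    fun x z => by simp [ric, hL]⟩

/-- for `n ≥ 2`, reals `a, b` with `1+2(n-1)a ≠ 0`, and any algebraic
curvature tensor `R` on `ℝⁿ`,
`Ric(D_{a,b}(R)) = -4b·Ric(R)² + (4/n)(2b+(n-2)a)·scal(R)·Ric(R)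
  + (2(n²b²-2(n-1)(a-b)(1-2b))/(n(1+2(n-1)a)))·|Ric₀(R)|²·id + (4/n²)(a-b)·scal(R)²·id`. -/
theorem stmt_13 (n : ℕ) (hn : 2 ≤ n) (a b : ℝ)
    (hab : 1 + 2 * ((n : ℝ) - 1) * a ≠ 0)
    (R : Curv4 n) (hR : IsAlgCurv R) :
    ∀ x z : En n,
      ric (Dab a b R) x z =
        -4 * b * bilSq (ric R) x z +
          4 / (n : ℝ) * (2 * b + ((n : ℝ) - 2) * a) * scal R * ric R x z +
          2 * ((n : ℝ) ^ 2 * b ^ 2 - 2 * ((n : ℝ) - 1) * (a - b) * (1 - 2 * b)) /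
              ((n : ℝ) * (1 + 2 * ((n : ℝ) - 1) * a)) * bilNormSq (ric0 R) * ⟪x, z⟫ +
          4 / (n : ℝ) ^ 2 * (a - b) * scal R ^ 2 * ⟪x, z⟫ := by
  intro x z
  have hn0 : (n : ℝ) ≠ 0 := by exact_mod_cast (by omega : n ≠ 0)
  have hric : IsBilinear (ric R) := hR.1.isBilinear_ric
  have hric0 : IsBilinear (ric0 R) := hric.sub_const_mul_inner _
  have hsq0 : IsBilinear (bilSq (ric0 R)) := hric0.bilMul hric0
  have hsq : bilSq (ric0 R) x z
      = bilSq (ric R) x z - 2 * (scal R / n) * ric R x z + (scal R / n) ^ 2 * ⟪x, z⟫ :=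
    hric.bilSq_sub_const_mul_inner _ x z
  unfold Dab
  simp only [ric_add, ric_const_mul, ric_KN, bilTr_ric0 hn0, bilTr_idB, bilTr_ric,
    bilTr_bilSq, hsq0.bilMul_idB, hsq0.idB_bilMul, isBilinear_idB.bilMul_idB, bilMul_self]
  simp only [idB, hsq]
  -- `field_simp` only cancels this denominator against `hab` when it is an atom
  generalize hd : 1 + 2 * ((n : ℝ) - 1) * a = d at hab ⊢
  field_simp
  subst hd
  ring
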